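/- Let g = g_{5,3,8(λ,φ)}. For every F ∈ g*, the skew-symmetric bilinear form B_F has rank either 0 or 2; equivalently, the subspace {X ∈ g : F([X, Y]) = 0 for all Y ∈ g} has dimension 5 or 3. (This is the infinitesimal MD-condition: every coadjoint orbit of the corresponding connected simply connected Lie group G_{5,3,8(λ,φ)} has dimension 0 or 2, so it is an MD5-group.) -/

import Mathlib

open scoped Matrix

/-- The Lie bracket of g_{5,3,8(λ,φ)}: [X1,X2] = X3, [X2,X3] = cos φ·X3 + sin φ·X4, [X2,X4] = −sin φ·X3 + cos φ·X4, [X2,X5] = λ·X5,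
written in coordinates with respect to the basis (X₁, X₂, X₃, X₄, X₅) (all other
brackets of basis vectors vanish); it is the bilinear extension of the structure
constants above. -/
noncomputable def bracketg538 (l φ : ℝ) (U V : Fin 5 → ℝ) : Fin 5 → ℝ :=
  ![0, 0,
    (U 0 * V 1 - U 1 * V 0) + Real.cos φ * (U 1 * V 2 - U 2 * V 1) - Real.sin φ * (U 1 * V 3 - U 3 * V 1),
    Real.sin φ * (U 1 * V 2 - U 2 * V 1) + Real.cos φ * (U 1 * V 3 - U 3 * V 1),
    l * (U 1 * V 4 - U 4 * V 1)]

/-- The matrix (in the basis (X₁, ..., X₅)) of the skew-symmetric bilinear form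
B_F(X, Y) = F([X, Y]); the functional F is identified with its coordinate vector with
respect to the dual basis, acting by the dot product. -/
noncomputable def BFg538 (l φ : ℝ) (F : Fin 5 → ℝ) : Matrix (Fin 5) (Fin 5) ℝ :=
  Matrix.of fun i j => F ⬝ᵥ bracketg538 l φ (Pi.single i 1) (Pi.single j 1)

/-- The radical {X ∈ g | F([X, Y]) = 0 for all Y ∈ g} of the form B_F, as a subspace. -/
noncomputable def radg538 (l φ : ℝ) (F : Fin 5 → ℝ) : Submodule ℝ (Fin 5 → ℝ) where
  carrier := {X | ∀ Y : Fin 5 → ℝ, F ⬝ᵥ bracketg538 l φ X Y = 0}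
  zero_mem' := by
    intro Y
    simp [bracketg538, dotProduct, Fin.sum_univ_five]
  add_mem' := by
    intro a b ha hb Y
    have h1 := ha Y
    have h2 := hb Y
    simp only [bracketg538, dotProduct, Fin.sum_univ_five, Matrix.cons_val_zero,
      Matrix.cons_val_one, Matrix.head_cons, Matrix.cons_val_two, Matrix.tail_cons,
      Matrix.cons_val_three, Matrix.cons_val_four, Pi.add_apply] at h1 h2 ⊢
    linear_combination h1 + h2
  smul_mem' := by
    intro c a ha Y
    have h1 := ha Y
    simp only [bracketg538, dotProduct, Fin.sum_univ_five, Matrix.cons_val_zero,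
      Matrix.cons_val_one, Matrix.head_cons, Matrix.cons_val_two, Matrix.tail_cons,
      Matrix.cons_val_three, Matrix.cons_val_four, Pi.smul_apply, smul_eq_mul] at h1 ⊢
    linear_combination c * h1

/-!
The span of `X₁, X₃, X₄, X₅` is an abelian ideal complementary to `ℝ X₂`, so every bracket
has the form `[X, Y] = x₂ · ad X₂ (Y) - y₂ · ad X₂ (X)`. Hence `B_F = X₂* ∧ (F ∘ ad X₂)` is a wedge
of two covectors. Either `F ∘ ad X₂ = 0` and `B_F = 0`, or the two covectors are linearly
independent (since `F ∘ ad X₂` kills `X₂`), and then `B_F` has rank 2 and radical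
`ker X₂* ∩ ker (F ∘ ad X₂)` of dimension 3.
-/

theorem LinearIndependent.smul_sub_smul_eq_zero_iff {K M : Type*} [Field K] [AddCommGroup M]
    [Module K M] {x y : M} (h : LinearIndependent K ![x, y]) {a b : K} :
    a • x - b • y = 0 ↔ a = 0 ∧ b = 0 := by
  refine ⟨fun hab => ?_, fun ⟨ha, hb⟩ => by simp [ha, hb]⟩
  simpa using LinearIndependent.pair_iff.1 h a (-b) (by rw [neg_smul, ← sub_eq_add_neg, hab])

theorem linearIndependent_pair_single_one {K n : Type*} [Field K] [DecidableEq n] {i : n}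
    {v : n → K} (hvi : v i = 0) (hv : v ≠ 0) : LinearIndependent K ![Pi.single i 1, v] := by
  refine LinearIndependent.pair_iff.2 fun s t hst => ?_
  have hs : s = 0 := by simpa [hvi] using congrFun hst i
  subst hs
  exact ⟨rfl, (smul_eq_zero.1 (by simpa using hst)).resolve_right hv⟩

namespace Matrix

variable {K n : Type*} [Field K] [Fintype n] {u v : n → K}

def wedge (u v : n → K) : Matrix n n K := vecMulVec u v - vecMulVec v u

theorem wedge_mulVec (u v X : n → K) :
    wedge u v *ᵥ X = (v ⬝ᵥ X) • u - (u ⬝ᵥ X) • v := by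
  simp only [wedge, sub_mulVec, vecMulVec_mulVec, op_smul_eq_smul]

theorem mem_ker_mulVecLin_pair_iff {X : n → K} :
    X ∈ LinearMap.ker (of ![u, v]).mulVecLin ↔ u ⬝ᵥ X = 0 ∧ v ⬝ᵥ X = 0 := by
  simp [funext_iff, Fin.forall_fin_two]

theorem ker_mulVecLin_wedge (h : LinearIndependent K ![u, v]) :
    LinearMap.ker (wedge u v).mulVecLin = LinearMap.ker (of ![u, v]).mulVecLin := by
  ext X
  rw [mem_ker_mulVecLin_pair_iff, LinearMap.mem_ker, mulVecLin_apply, wedge_mulVec,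
    h.smul_sub_smul_eq_zero_iff, and_comm]

theorem mem_ker_mulVecLin_pair_iff_forall (h : LinearIndependent K ![u, v]) (X : n → K) :
    X ∈ LinearMap.ker (of ![u, v]).mulVecLin ↔
      ∀ Y, (u ⬝ᵥ X) * (v ⬝ᵥ Y) - (v ⬝ᵥ X) * (u ⬝ᵥ Y) = 0 := by
  have hdot (Y : n → K) : (u ⬝ᵥ X) * (v ⬝ᵥ Y) - (v ⬝ᵥ X) * (u ⬝ᵥ Y) =
      ((u ⬝ᵥ X) • v - (v ⬝ᵥ X) • u) ⬝ᵥ Y := by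
    rw [sub_dotProduct, smul_dotProduct, smul_dotProduct, smul_eq_mul, smul_eq_mul]
  simp only [hdot, dotProduct_eq_zero_iff,
    (LinearIndependent.pair_symm_iff.1 h).smul_sub_smul_eq_zero_iff]
  exact mem_ker_mulVecLin_pair_iff

theorem finrank_ker_mulVecLin_pair (h : LinearIndependent K ![u, v]) :
    Module.finrank K (LinearMap.ker (of ![u, v]).mulVecLin) = Fintype.card n - 2 := by
  have hrank : (of ![u, v]).rank = 2 := h.rank_matrix
  have := (of ![u, v]).mulVecLin.finrank_range_add_finrank_ker
  rw [Module.finrank_fintype_fun_eq_card] at this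
  unfold rank at hrank
  omega

theorem rank_wedge (h : LinearIndependent K ![u, v]) : (wedge u v).rank = 2 := by
  have hle : 2 ≤ Fintype.card n :=
    (h.rank_matrix (M := of ![u, v])).symm.trans_le (rank_le_card_width _)
  have := (wedge u v).mulVecLin.finrank_range_add_finrank_ker
  rw [Module.finrank_fintype_fun_eq_card, ker_mulVecLin_wedge h, finrank_ker_mulVecLin_pair h]
    at this
  unfold rank
  omega

end Matrix

open Matrix

/-- The coordinates `F([X₂, Xⱼ])` of the covector `F ∘ ad X₂`. -/
noncomputable def FadX2g538 (l φ : ℝ) (F : Fin 5 → ℝ) : Fin 5 → ℝ :=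
  ![-F 2, 0, F 2 * Real.cos φ + F 3 * Real.sin φ, F 3 * Real.cos φ - F 2 * Real.sin φ, l * F 4]

theorem dotProduct_bracketg538 (l φ : ℝ) (F X Y : Fin 5 → ℝ) :
    F ⬝ᵥ bracketg538 l φ X Y = (Pi.single 1 1 ⬝ᵥ X) * (FadX2g538 l φ F ⬝ᵥ Y)
      - (FadX2g538 l φ F ⬝ᵥ X) * (Pi.single 1 1 ⬝ᵥ Y) := by
  rw [single_one_dotProduct, single_one_dotProduct]
  simp only [bracketg538, FadX2g538, dotProduct, Fin.sum_univ_five, cons_val]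
  ring

theorem BFg538_eq_wedge (l φ : ℝ) (F : Fin 5 → ℝ) :
    BFg538 l φ F = wedge (Pi.single 1 1) (FadX2g538 l φ F) := by
  ext i j
  simp [BFg538, dotProduct_bracketg538, wedge, vecMulVec]

theorem radg538_eq_ker (l φ : ℝ) (F : Fin 5 → ℝ)
    (h : LinearIndependent ℝ ![Pi.single 1 1, FadX2g538 l φ F]) :
    radg538 l φ F = LinearMap.ker (of ![Pi.single 1 1, FadX2g538 l φ F]).mulVecLin := by
  ext X
  rw [mem_ker_mulVecLin_pair_iff_forall h]
  simp only [← dotProduct_bracketg538]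
  rfl

theorem md_condition_g538_general (l φ : ℝ) (F : Fin 5 → ℝ) :
    ((BFg538 l φ F).rank = 0 ∨ (BFg538 l φ F).rank = 2) ∧
    (Module.finrank ℝ (radg538 l φ F) = 5 ∨ Module.finrank ℝ (radg538 l φ F) = 3) := by
  by_cases hv : FadX2g538 l φ F = 0
  · have hB : BFg538 l φ F = 0 := by
      rw [BFg538_eq_wedge, hv, wedge, vecMulVec_zero, zero_vecMulVec, sub_zero]
    have hrad : radg538 l φ F = ⊤ :=
      Submodule.eq_top_iff'.2 fun X Y => by simp [dotProduct_bracketg538, hv]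
    exact ⟨Or.inl (by rw [hB, rank_zero]),
      Or.inl (by rw [hrad, finrank_top, Module.finrank_fin_fun])⟩
  · have h := linearIndependent_pair_single_one (i := 1) rfl hv
    refine ⟨Or.inr ?_, Or.inr ?_⟩
    · rw [BFg538_eq_wedge, rank_wedge h]
    · rw [radg538_eq_ker l φ F h, finrank_ker_mulVecLin_pair h, Fintype.card_fin]

/-- For every functional F, the skew-symmetric form B_F has rank 0 or 2; equivalently,
its radical {X | F([X, Y]) = 0 for all Y} has dimension 5 or 3 (the infinitesimal
MD-condition: every coadjoint orbit has dimension 0 or 2). -/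
theorem md_condition_g538 (l φ : ℝ) (hl0 : l ≠ 0) (hφ0 : 0 < φ) (hφπ : φ < Real.pi) (F : Fin 5 → ℝ) :
    ((BFg538 l φ F).rank = 0 ∨ (BFg538 l φ F).rank = 2) ∧
    (Module.finrank ℝ (radg538 l φ F) = 5 ∨ Module.finrank ℝ (radg538 l φ F) = 3) :=
  md_condition_g538_general l φ F
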